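/- arXiv:1901.03645 — 2 statements merged into one kernel-verified Lean document; each statement's English description precedes it below -/
import Mathlib

section
/- Theorem 2.3 (Choquet decomposition of the lower natural extension): Suppose Σ_{ω ∈ Ω} p̄(ω) ≥ 1. Let f be a gamble decomposed in terms of its level sets as f = Σ_{i=0}^{n} λ_i I_{A_i}, where λ_0 ∈ ℝ, λ_1, …, λ_n > 0, and Ω = A_0 ⊋ A_1 ⊋ ⋯ ⊋ A_n ≠ ∅. Then E_{p̄}(f) = Σ_{i=0}^{n} λ_i E_{p̄}(A_i). -/
/-!
Writing `M` for the credal set `{p | 0 ≤ p ≤ pbar, ∑ p = 1}`, the lower natural extension is the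
supremum of the dual feasible values `α` (those with `g - α ≥ ∑ μ ω (pbar ω - 1_{ω})` for some
`μ ≥ 0`), and each of them is at most `∑ p g` for every `p ∈ M`. So a dual feasible value that is an
expectation under some `p ∈ M` is the lower natural extension. For the chain `A i`, the `p ∈ M`
that puts mass on the layers `A i \ A (i + 1)` as low as possible, proportionally to `pbar`, has
`p (A i) = max 0 (1 - pbar (A i)ᶜ)` for every `i` at once, and this value is dual feasible for
`1_{A i}` with `μ = 1_{(A i)ᶜ}` (or `μ = 0` when it vanishes). Nonnegative combinations of dual
feasible values are dual feasible, so the same `p` computes the lower natural extension of `f`,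
which is therefore the corresponding combination of the `p (A i)`.
-/

/-- The upper natural extension of a gamble `f` with respect to the upper
probability mass function `pbar`. -/
noncomputable def upperExt {Ω : Type*} [Fintype Ω] [DecidableEq Ω]
    (pbar f : Ω → ℝ) : ℝ :=
  sInf {β : ℝ | ∃ lam : Ω → ℝ, (∀ ω, 0 ≤ lam ω) ∧
    ∀ ω' : Ω, ∑ ω : Ω, lam ω * (pbar ω - (if ω' = ω then (1 : ℝ) else 0)) ≤ β - f ω'}

/-- The lower natural extension, conjugate of the upper natural extension. -/
noncomputable def lowerExt {Ω : Type*} [Fintype Ω] [DecidableEq Ω]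
    (pbar f : Ω → ℝ) : ℝ :=
  -(upperExt pbar (fun ω => -(f ω)))

open Finset

section Duality

variable {Ω : Type*} [Fintype Ω]

def DualFeasible (pbar g : Ω → ℝ) (α : ℝ) : Prop :=
  ∃ μ : Ω → ℝ, (∀ ω, 0 ≤ μ ω) ∧ ∀ ω', α + ∑ ω, μ ω * pbar ω - μ ω' ≤ g ω'

def credalSet (pbar : Ω → ℝ) : Set (Ω → ℝ) :=
  {p | (∀ ω, 0 ≤ p ω ∧ p ω ≤ pbar ω) ∧ ∑ ω, p ω = 1}

theorem lowerExt_eq_sSup_dualFeasible [DecidableEq Ω] (pbar g : Ω → ℝ) :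
    lowerExt pbar g = sSup {α | DualFeasible pbar g α} := by
  have h : {β : ℝ | ∃ μ : Ω → ℝ, (∀ ω, 0 ≤ μ ω) ∧
      ∀ ω', ∑ ω, μ ω * (pbar ω - if ω' = ω then 1 else 0) ≤ β - -g ω'} =
      -{α | DualFeasible pbar g α} := by
    ext β
    simp only [Set.mem_ofPred_eq, Set.mem_neg, DualFeasible, mul_sub, sum_sub_distrib,
      sum_mul_boole, mem_univ, if_true]
    refine exists_congr fun μ => and_congr_right fun _ => forall_congr' fun ω' => ?_
    constructor <;> intro h <;> linarith
  rw [lowerExt, upperExt, h, Real.sInf_neg, neg_neg]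

theorem DualFeasible.le_sum_mul {pbar g : Ω → ℝ} {α : ℝ} (hα : DualFeasible pbar g α)
    {p : Ω → ℝ} (hp : p ∈ credalSet pbar) : α ≤ ∑ ω, p ω * g ω := by
  obtain ⟨μ, hμ, hαμ⟩ := hα
  obtain ⟨hpb, hp1⟩ := hp
  have hpμ : ∑ ω, p ω * μ ω ≤ ∑ ω, μ ω * pbar ω :=
    sum_le_sum fun ω _ => by nlinarith [hpb ω, hμ ω]
  calc α ≤ ∑ ω', p ω' * (α + ∑ ω, μ ω * pbar ω - μ ω') := by
        simp only [mul_sub, mul_add, sum_sub_distrib, sum_add_distrib, ← sum_mul, hp1, one_mul]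
        linarith
    _ ≤ ∑ ω, p ω * g ω := sum_le_sum fun ω _ => mul_le_mul_of_nonneg_left (hαμ ω) (hpb ω).1

theorem lowerExt_eq_of_dualFeasible [DecidableEq Ω] {pbar g : Ω → ℝ} {p : Ω → ℝ}
    (hp : p ∈ credalSet pbar) (hg : DualFeasible pbar g (∑ ω, p ω * g ω)) :
    lowerExt pbar g = ∑ ω, p ω * g ω := by
  rw [lowerExt_eq_sSup_dualFeasible]
  refine le_antisymm (csSup_le ⟨_, hg⟩ fun α hα => hα.le_sum_mul hp) (le_csSup ?_ hg)
  exact ⟨_, fun α hα => hα.le_sum_mul hp⟩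

theorem dualFeasible_const (pbar : Ω → ℝ) (c : ℝ) : DualFeasible pbar (fun _ => c) c :=
  ⟨0, fun _ => le_rfl, fun _ => by simp⟩

theorem DualFeasible.const_mul {pbar g : Ω → ℝ} {α c : ℝ} (hα : DualFeasible pbar g α)
    (hc : 0 ≤ c) : DualFeasible pbar (fun ω => c * g ω) (c * α) := by
  obtain ⟨μ, hμ, hαμ⟩ := hα
  refine ⟨fun ω => c * μ ω, fun ω => mul_nonneg hc (hμ ω), fun ω' => ?_⟩
  have := mul_le_mul_of_nonneg_left (hαμ ω') hc
  simp only [mul_assoc, ← mul_sum] at this ⊢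
  linarith

theorem DualFeasible.sum {ι : Type*} {pbar : Ω → ℝ} {s : Finset ι} {g : ι → Ω → ℝ}
    {α : ι → ℝ} (h : ∀ i ∈ s, DualFeasible pbar (g i) (α i)) :
    DualFeasible pbar (fun ω => ∑ i ∈ s, g i ω) (∑ i ∈ s, α i) := by
  choose! μ hμ hαμ using h
  refine ⟨fun ω => ∑ i ∈ s, μ i ω, fun ω => sum_nonneg fun i hi => hμ i hi ω, fun ω' => ?_⟩
  calc ∑ i ∈ s, α i + ∑ ω, (∑ i ∈ s, μ i ω) * pbar ω - ∑ i ∈ s, μ i ω'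
      = ∑ i ∈ s, (α i + ∑ ω, μ i ω * pbar ω - μ i ω') := by
        simp only [sum_mul, sum_sub_distrib, sum_add_distrib]
        rw [sum_comm]
    _ ≤ ∑ i ∈ s, g i ω' := sum_le_sum fun i hi => hαμ i hi ω'

end Duality

theorem antitoneOn_Iic_of_succ_le {α : Type*} [Preorder α] {f : ℕ → α} {n : ℕ}
    (h : ∀ i < n, f (i + 1) ≤ f i) : AntitoneOn f (Set.Iic n) := by
  have hmin : Antitone fun i => f (min i n) := antitone_nat_of_succ_le fun i => by
    rcases lt_or_ge i n with hi | hi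
    · simpa [min_eq_left hi.le, min_eq_left (Nat.succ_le_of_lt hi)] using h i hi
    · simp [min_eq_right hi, min_eq_right (Nat.le_succ_of_le hi)]
  intro i hi j hj hij
  simpa [min_eq_left (Set.mem_Iic.mp hi), min_eq_left (Set.mem_Iic.mp hj)] using hmin hij

section Filling

variable {Ω : Type*} [DecidableEq Ω]

theorem exists_sum_eq_of_le_sum {c : Ω → ℝ} (hc : ∀ ω, 0 ≤ c ω) (S : Finset Ω) {t : ℝ}
    (ht₀ : 0 ≤ t) (ht : t ≤ ∑ ω ∈ S, c ω) :
    ∃ q : Ω → ℝ, (∀ ω, 0 ≤ q ω ∧ q ω ≤ c ω) ∧ (∀ ω ∉ S, q ω = 0) ∧ ∑ ω ∈ S, q ω = t := by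
  set s := ∑ ω ∈ S, c ω
  have hθ₀ : 0 ≤ t / s := div_nonneg ht₀ (ht₀.trans ht)
  have hθ₁ : t / s ≤ 1 := div_le_one_of_le₀ ht (ht₀.trans ht)
  refine ⟨fun ω => if ω ∈ S then t / s * c ω else 0, fun ω => ?_, fun ω hω => if_neg hω, ?_⟩
  · dsimp only
    split_ifs
    · exact ⟨mul_nonneg hθ₀ (hc ω), mul_le_of_le_one_left (hc ω) hθ₁⟩
    · exact ⟨le_rfl, hc ω⟩
  · rw [sum_ite_of_true fun _ h => h, ← mul_sum]
    rcases eq_or_ne s 0 with hs | hs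
    · rw [hs, div_zero, zero_mul]; linarith
    · exact div_mul_cancel₀ t hs

theorem exists_sum_eq_of_antitoneOn {c : Ω → ℝ} (hc : ∀ ω, 0 ≤ c ω) (n : ℕ) (A : ℕ → Finset Ω)
    (T : ℕ → ℝ) (hA : AntitoneOn A (Set.Iic n)) (hTn : 0 ≤ T n ∧ T n ≤ ∑ ω ∈ A n, c ω)
    (hT : ∀ i < n, 0 ≤ T i - T (i + 1) ∧ T i - T (i + 1) ≤ ∑ ω ∈ A i \ A (i + 1), c ω) :
    ∃ q : Ω → ℝ, (∀ ω, 0 ≤ q ω ∧ q ω ≤ c ω) ∧ (∀ ω ∉ A 0, q ω = 0) ∧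
      ∀ i ≤ n, ∑ ω ∈ A i, q ω = T i := by
  induction n generalizing A T with
  | zero =>
    obtain ⟨q, hqc, hq, hqT⟩ := exists_sum_eq_of_le_sum hc (A 0) hTn.1 hTn.2
    exact ⟨q, hqc, hq, fun i hi => by rwa [Nat.le_zero.mp hi]⟩
  | succ n ih =>
    have hA' : AntitoneOn (fun i => A (i + 1)) (Set.Iic n) := fun i hi j hj hij =>
      hA (Nat.succ_le_succ hi) (Nat.succ_le_succ hj) (Nat.succ_le_succ hij)
    have hAi : ∀ i ≤ n + 1, A i ⊆ A 0 := fun i hi => hA (Nat.zero_le _) hi (Nat.zero_le i)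
    obtain ⟨q, hqc, hq, hqT⟩ := ih (fun i => A (i + 1)) (fun i => T (i + 1)) hA' hTn
      fun i hi => hT (i + 1) (by omega)
    obtain ⟨r, hrc, hr, hrT⟩ := exists_sum_eq_of_le_sum hc (A 0 \ A 1) (hT 0 (by omega)).1
      (hT 0 (by omega)).2
    have hr₁ : ∀ i ≤ n + 1, 1 ≤ i → ∀ ω ∈ A i, r ω = 0 := fun i hi h1 ω hω =>
      hr ω fun h => (mem_sdiff.mp h).2 (hA (by simp) hi h1 hω)
    refine ⟨q + r, fun ω => ?_, fun ω hω => ?_, fun i hi => ?_⟩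
    · by_cases hω : ω ∈ A 1
      · simpa [hr₁ 1 (by omega) le_rfl ω hω] using hqc ω
      · simpa [hq ω hω] using hrc ω
    · simp [hq ω fun h => hω (hAi 1 (by omega) h), hr ω fun h => hω (mem_sdiff.mp h).1]
    · simp only [Pi.add_apply, sum_add_distrib]
      rcases i with _ | j
      · have hq₀ : ∑ ω ∈ A 0, q ω = T 1 :=
          (sum_subset (hAi 1 (by omega)) fun ω _ hω => hq ω hω).symm.trans (hqT 0 (by omega))
        have hr₀ : ∑ ω ∈ A 0, r ω = T 0 - T 1 :=
          (sum_subset sdiff_subset fun ω _ hω => hr ω hω).symm.trans hrT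
        rw [hq₀, hr₀]; ring
      · rw [hqT j (by omega), sum_eq_zero (hr₁ (j + 1) hi (by omega)), add_zero]

end Filling

section LowerProb

variable {Ω : Type*} [Fintype Ω] [DecidableEq Ω]

def lowerProb (pbar : Ω → ℝ) (A : Finset Ω) : ℝ :=
  max 0 (1 - ∑ ω ∈ Aᶜ, pbar ω)

theorem lowerProb_univ (pbar : Ω → ℝ) : lowerProb pbar univ = 1 := by
  simp [lowerProb]

theorem dualFeasible_indicator (pbar : Ω → ℝ) (A : Finset Ω) :
    DualFeasible pbar (fun ω => if ω ∈ A then 1 else 0) (lowerProb pbar A) := by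
  by_cases hA : ∑ ω ∈ Aᶜ, pbar ω ≤ 1
  · refine ⟨fun ω => if ω ∈ Aᶜ then 1 else 0, fun ω => by positivity, fun ω' => ?_⟩
    have hμ : ∑ ω, (if ω ∈ Aᶜ then 1 else 0) * pbar ω = ∑ ω ∈ Aᶜ, pbar ω := by
      simp only [ite_mul, one_mul, zero_mul, sum_ite_mem, univ_inter]
    rw [hμ, lowerProb, max_eq_right (by linarith)]
    by_cases hω' : ω' ∈ A <;> simp [hω']
  · refine ⟨0, fun _ => le_rfl, fun ω' => ?_⟩
    rw [lowerProb, max_eq_left (by linarith)]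
    by_cases hω' : ω' ∈ A <;> simp [hω']

variable {pbar : Ω → ℝ}

theorem lowerProb_nonneg_and_le_sum (hpbar : ∀ ω, 0 ≤ pbar ω) (hsum : 1 ≤ ∑ ω, pbar ω)
    (A : Finset Ω) : 0 ≤ lowerProb pbar A ∧ lowerProb pbar A ≤ ∑ ω ∈ A, pbar ω := by
  have := sum_add_sum_compl A pbar
  exact ⟨le_max_left _ _, max_le (sum_nonneg fun ω _ => hpbar ω) (by linarith)⟩

theorem lowerProb_sub_nonneg_and_le_sum_sdiff (hpbar : ∀ ω, 0 ≤ pbar ω) {A B : Finset Ω}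
    (hBA : B ⊆ A) : 0 ≤ lowerProb pbar A - lowerProb pbar B ∧
      lowerProb pbar A - lowerProb pbar B ≤ ∑ ω ∈ A \ B, pbar ω := by
  have hB : 1 - ∑ ω ∈ Bᶜ, pbar ω = (1 - ∑ ω ∈ Aᶜ, pbar ω) - ∑ ω ∈ A \ B, pbar ω := by
    rw [← compl_sdiff_compl, ← sum_sdiff (compl_subset_compl.mpr hBA)]
    ring
  have hd : 0 ≤ ∑ ω ∈ A \ B, pbar ω := sum_nonneg fun ω _ => hpbar ω
  simp only [lowerProb, hB]
  generalize 1 - ∑ ω ∈ Aᶜ, pbar ω = x at *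
  generalize ∑ ω ∈ A \ B, pbar ω = d at *
  have h₁ : max 0 (x - d) ≤ max 0 x := max_le_max_left 0 (by linarith)
  have h₂ : max 0 x ≤ max 0 (x - d) + d :=
    max_le (add_nonneg (le_max_left _ _) hd) (by linarith [le_max_right 0 (x - d)])
  exact ⟨by linarith, by linarith⟩

theorem exists_mem_credalSet_sum_eq_lowerProb (hpbar : ∀ ω, 0 ≤ pbar ω)
    (hsum : 1 ≤ ∑ ω, pbar ω) {n : ℕ} {A : ℕ → Finset Ω} (hA0 : A 0 = univ)
    (hA : AntitoneOn A (Set.Iic n)) :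
    ∃ p ∈ credalSet pbar, ∀ i ≤ n, ∑ ω ∈ A i, p ω = lowerProb pbar (A i) := by
  obtain ⟨p, hp, -, hpA⟩ := exists_sum_eq_of_antitoneOn hpbar n A (fun i => lowerProb pbar (A i))
    hA (lowerProb_nonneg_and_le_sum hpbar hsum (A n)) fun i hi =>
      lowerProb_sub_nonneg_and_le_sum_sdiff hpbar
        (hA (Set.mem_Iic.mpr hi.le) (Set.mem_Iic.mpr hi) i.le_succ)
  refine ⟨p, ⟨hp, ?_⟩, hpA⟩
  simpa [hA0, lowerProb_univ] using hpA 0 (Nat.zero_le n)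

end LowerProb

theorem lowerExt_levelSet_decomposition_general
    {Ω : Type*} [Fintype Ω] [DecidableEq Ω]
    (pbar : Ω → ℝ) (hpbar : ∀ ω, 0 ≤ pbar ω ∧ pbar ω ≤ 1)
    (hasl : 1 ≤ ∑ ω : Ω, pbar ω)
    (n : ℕ) (lam : ℕ → ℝ) (A : ℕ → Finset Ω)
    (hA0 : A 0 = Finset.univ)
    (hchain : ∀ i < n, A (i + 1) ⊂ A i)
    (hlam : ∀ i, 1 ≤ i → i ≤ n → 0 < lam i)
    (f : Ω → ℝ)
    (hf : ∀ ω, f ω = ∑ i ∈ Finset.range (n + 1),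
      lam i * (if ω ∈ A i then (1 : ℝ) else 0)) :
    lowerExt pbar f = ∑ i ∈ Finset.range (n + 1),
      lam i * lowerExt pbar (fun ω => if ω ∈ A i then (1 : ℝ) else 0) := by
  obtain ⟨p, hp, hpA⟩ := exists_mem_credalSet_sum_eq_lowerProb (fun ω => (hpbar ω).1) hasl hA0
    (antitoneOn_Iic_of_succ_le fun i hi => (hchain i hi).subset)
  have hexp : ∀ i ≤ n, ∑ ω, p ω * (if ω ∈ A i then 1 else 0) = lowerProb pbar (A i) :=
    fun i hi => by simp only [mul_ite, mul_one, mul_zero, sum_ite_mem, univ_inter, hpA i hi]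
  have hind : ∀ i ≤ n,
      lowerExt pbar (fun ω => if ω ∈ A i then 1 else 0) = lowerProb pbar (A i) := fun i hi => by
    rw [lowerExt_eq_of_dualFeasible hp, hexp i hi]
    simpa only [hexp i hi] using dualFeasible_indicator pbar (A i)
  have hterm : ∀ i ∈ range (n + 1), DualFeasible pbar
      (fun ω => lam i * if ω ∈ A i then 1 else 0) (lam i * lowerProb pbar (A i)) := by
    rintro (_ | i) hi
    · simpa [hA0, lowerProb_univ] using dualFeasible_const pbar (lam 0)
    · exact (dualFeasible_indicator pbar _).const_mul
        (hlam (i + 1) (by omega) (mem_range_succ_iff.mp hi)).le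
  have hEf : ∑ ω, p ω * f ω = ∑ i ∈ range (n + 1), lam i * lowerProb pbar (A i) := by
    simp only [hf, mul_sum]
    rw [sum_comm]
    refine sum_congr rfl fun i hi => ?_
    rw [← hexp i (mem_range_succ_iff.mp hi), mul_sum]
    exact sum_congr rfl fun ω _ => mul_left_comm _ _ _
  rw [lowerExt_eq_of_dualFeasible hp (by simpa only [hEf, ← hf] using DualFeasible.sum hterm), hEf]
  exact sum_congr rfl fun i hi => by rw [hind i (mem_range_succ_iff.mp hi)]

/-- Theorem 2.3: Choquet decomposition of the lower natural extension in terms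
of the level sets of `f`. -/
theorem lowerExt_levelSet_decomposition
    {Ω : Type*} [Fintype Ω] [Nonempty Ω] [DecidableEq Ω]
    (pbar : Ω → ℝ) (hpbar : ∀ ω, 0 ≤ pbar ω ∧ pbar ω ≤ 1)
    (hasl : 1 ≤ ∑ ω : Ω, pbar ω)
    (n : ℕ) (lam : ℕ → ℝ) (A : ℕ → Finset Ω)
    (hA0 : A 0 = Finset.univ)
    (hchain : ∀ i < n, A (i + 1) ⊂ A i)
    (hAn : (A n).Nonempty)
    (hlam : ∀ i, 1 ≤ i → i ≤ n → 0 < lam i)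
    (f : Ω → ℝ)
    (hf : ∀ ω, f ω = ∑ i ∈ Finset.range (n + 1),
      lam i * (if ω ∈ A i then (1 : ℝ) else 0)) :
    lowerExt pbar f = ∑ i ∈ Finset.range (n + 1),
      lam i * lowerExt pbar (fun ω => if ω ∈ A i then (1 : ℝ) else 0) :=
  lowerExt_levelSet_decomposition_general pbar hpbar hasl n lam A hA0 hchain hlam f hf
end

section
/- Minimax identity for the upper natural extension (Appendix B, equation (B.1)): Let g_1, …, g_n be gambles whose family avoids sure loss, and let f be any gamble. Then Ē_D(f) = min { max_{ω ∈ Ω} ( f(ω) + Σ_{i=1}^{n} λ_i g_i(ω) ) : λ_1, …, λ_n ≥ 0 }; in particular the infimum defining Ē_D(f) is attained, i.e. there exist λ_1, …, λ_n ≥ 0 with max_{ω ∈ Ω} ( f(ω) + Σ_{i=1}^{n} λ_i g_i(ω) ) = Ē_D(f), and every choice of λ_1, …, λ_n ≥ 0 gives max_{ω ∈ Ω} ( f(ω) + Σ_{i=1}^{n} λ_i g_i(ω) ) ≥ Ē_D(f). -/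
/-!
`upperExtD g f` is the infimum of the set of `β` for which `β - f` lies in the cone generated by
the `g i` and the coordinate vectors of `Ω → ℝ`. By conic Carathéodory, a finitely generated cone
is a finite union of images of orthants under injective linear maps, hence closed; so this set of
`β` is closed. Avoiding sure loss bounds it below by `min f`, so the infimum is attained.
-/

open Finset Topology

/-- The upper natural extension of a gamble `f` relative to the finite family
of gambles `g`. -/
noncomputable def upperExtD {Ω : Type*} [Fintype Ω] {n : ℕ}
    (g : Fin n → Ω → ℝ) (f : Ω → ℝ) : ℝ :=
  sInf {β : ℝ | ∃ lam : Fin n → ℝ, (∀ i, 0 ≤ lam i) ∧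
    ∀ ω : Ω, ∑ i : Fin n, lam i * g i ω ≤ β - f ω}

section ConicHull

variable {ι E : Type*} [AddCommGroup E] [Module ℝ E]

def conicHull (v : ι → E) (s : Finset ι) : Set E :=
  {x | ∃ c : ι → ℝ, (∀ i ∈ s, 0 ≤ c i) ∧ ∑ i ∈ s, c i • v i = x}

variable {v : ι → E} {s t : Finset ι} {x : E}

theorem conicHull_mono (hts : t ⊆ s) : conicHull v t ⊆ conicHull v s := by
  classical
  rintro x ⟨c, hc, rfl⟩
  refine ⟨fun i => if i ∈ t then c i else 0, fun i _ => ?_, ?_⟩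
  · by_cases hi : i ∈ t <;> simp [hi, hc]
  · rw [← sum_subset hts fun i _ hi => by simp [hi]]
    exact sum_congr rfl fun i hi => by simp [hi]

theorem exists_erase_mem_conicHull_of_sum_smul_eq_zero [DecidableEq ι] (hx : x ∈ conicHull v s)
    {d : ι → ℝ} (hd : ∑ i ∈ s, d i • v i = 0) (hpos : ∃ i ∈ s, 0 < d i) :
    ∃ j ∈ s, x ∈ conicHull v (s.erase j) := by
  obtain ⟨c, hc, rfl⟩ := hx
  obtain ⟨j, hj, hmin⟩ := (s.filter (0 < d ·)).exists_min_image (fun i => c i / d i)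
    (by simpa [Finset.Nonempty] using hpos)
  rw [mem_filter] at hj
  set r := c j / d j
  have hr : 0 ≤ r := div_nonneg (hc j hj.1) hj.2.le
  have hnonneg : ∀ i ∈ s, 0 ≤ c i - r * d i := by
    intro i hi
    rcases lt_or_ge 0 (d i) with hdi | hdi
    · have := hmin i (mem_filter.mpr ⟨hi, hdi⟩)
      rw [le_div_iff₀ hdi] at this
      linarith
    · linarith [hc i hi, mul_nonpos_of_nonneg_of_nonpos hr hdi]
  have hzero : c j - r * d j = 0 := by
    simp only [r, div_mul_cancel₀ _ hj.2.ne', sub_self]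
  refine ⟨j, hj.1, fun i => c i - r * d i, fun i hi => hnonneg i (mem_of_mem_erase hi), ?_⟩
  rw [sum_erase s (by simp only [hzero, zero_smul])]
  simp only [sub_smul, mul_smul, sum_sub_distrib, ← smul_sum, hd, smul_zero, sub_zero]

theorem exists_erase_mem_conicHull [DecidableEq ι] (hs : ¬LinearIndepOn ℝ v (s : Set ι))
    (hx : x ∈ conicHull v s) : ∃ j ∈ s, x ∈ conicHull v (s.erase j) := by
  obtain ⟨d, hd, j, hj, hdj⟩ := not_linearIndepOn_finset_iff.mp hs
  -- rescaling by `d j` makes the coefficient at `j` positive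
  refine exists_erase_mem_conicHull_of_sum_smul_eq_zero hx (d := fun i => d j * d i) ?_
    ⟨j, hj, mul_self_pos.mpr hdj⟩
  simp only [mul_smul, ← smul_sum, hd, smul_zero]

theorem exists_linearIndepOn_mem_conicHull (hx : x ∈ conicHull v s) :
    ∃ t ⊆ s, LinearIndepOn ℝ v (t : Set ι) ∧ x ∈ conicHull v t := by
  classical
  induction s using Finset.strongInduction with
  | H s ih =>
    by_cases hs : LinearIndepOn ℝ v (s : Set ι)
    · exact ⟨s, subset_rfl, hs, hx⟩
    · obtain ⟨j, hj, hxj⟩ := exists_erase_mem_conicHull hs hx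
      obtain ⟨t, hts, ht, hxt⟩ := ih _ (erase_ssubset hj) hxj
      exact ⟨t, hts.trans (erase_subset j s), ht, hxt⟩

variable [TopologicalSpace E] [IsTopologicalAddGroup E] [ContinuousSMul ℝ E] [T2Space E]

theorem isClosed_conicHull_of_linearIndepOn (hs : LinearIndepOn ℝ v (s : Set ι)) :
    IsClosed (conicHull v s) := by
  classical
  let L := Fintype.linearCombination ℝ (fun i : s => v i)
  have hL : IsClosedEmbedding L := LinearMap.isClosedEmbedding_of_injective
    (LinearMap.ker_eq_bot.mpr hs.fintypeLinearCombination_injective)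
  convert hL.isClosedMap _ (isClosed_Ici (a := (0 : s → ℝ)))
  ext x
  simp only [conicHull, Set.mem_ofPred_eq, Set.mem_image, Set.mem_Ici, L,
    Fintype.linearCombination_apply]
  constructor
  · rintro ⟨c, hc, rfl⟩
    exact ⟨fun i => c i, fun i => hc i i.2, sum_coe_sort s fun i => c i • v i⟩
  · rintro ⟨c, hc, rfl⟩
    refine ⟨fun i => if h : i ∈ s then c ⟨i, h⟩ else 0,
      fun i hi => by simpa [hi] using hc ⟨i, hi⟩, ?_⟩
    rw [← sum_coe_sort s]
    simp

theorem isClosed_conicHull (v : ι → E) (s : Finset ι) : IsClosed (conicHull v s) := by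
  classical
  let S : Finset (Finset ι) := s.powerset.filter fun t => LinearIndepOn ℝ v (t : Set ι)
  have : conicHull v s = ⋃ t ∈ S, conicHull v t := by
    refine subset_antisymm (fun x hx => ?_) (Set.iUnion₂_subset fun t ht => ?_)
    · obtain ⟨t, hts, ht, hxt⟩ := exists_linearIndepOn_mem_conicHull hx
      exact Set.mem_biUnion (mem_filter.mpr ⟨mem_powerset.mpr hts, ht⟩) hxt
    · exact conicHull_mono (mem_powerset.mp (mem_filter.mp ht).1)
  rw [this]
  exact isClosed_biUnion_finset fun t ht =>
    isClosed_conicHull_of_linearIndepOn (mem_filter.mp ht).2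

end ConicHull

theorem isClosed_setOf_exists_nonneg_sum_mul_le {Ω ι : Type*} [Fintype Ω] [Fintype ι]
    (v : ι → Ω → ℝ) :
    IsClosed {x : Ω → ℝ | ∃ c : ι → ℝ, (∀ i, 0 ≤ c i) ∧ ∀ ω, ∑ i, c i * v i ω ≤ x ω} := by
  -- the slack `x - ∑ cᵢ vᵢ` is a nonnegative combination of the coordinate vectors
  convert isClosed_conicHull (Sum.elim v (Pi.basisFun ℝ Ω)) univ using 1
  ext x
  have hbasis (y : Ω → ℝ) : ∑ ω, y ω • Pi.basisFun ℝ Ω ω = y := by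
    simpa using (Pi.basisFun ℝ Ω).sum_repr y
  simp only [conicHull, Set.mem_ofPred_eq, mem_univ, forall_const, Fintype.sum_sum_type,
    Sum.elim_inl, Sum.elim_inr]
  constructor
  · rintro ⟨c, hc, hle⟩
    refine ⟨Sum.elim c (x - ∑ i, c i • v i), ?_, ?_⟩
    · rintro (i | ω)
      · exact hc i
      · simpa [Finset.sum_apply, sub_nonneg] using hle ω
    · simp only [Sum.elim_inl, Sum.elim_inr, hbasis, add_sub_cancel]
  · rintro ⟨c, hc, rfl⟩
    refine ⟨fun i => c (.inl i), fun i => hc _, fun ω => ?_⟩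
    rw [hbasis]
    simpa [Finset.sum_apply] using hc (.inr ω)

section Gambles

variable {Ω : Type*} [Fintype Ω] {n : ℕ} (g : Fin n → Ω → ℝ) (f : Ω → ℝ)

def sellingPrices : Set ℝ :=
  {β | ∃ lam : Fin n → ℝ, (∀ i, 0 ≤ lam i) ∧ ∀ ω, ∑ i, lam i * g i ω ≤ β - f ω}

theorem isClosed_sellingPrices : IsClosed (sellingPrices g f) :=
  (isClosed_setOf_exists_nonneg_sum_mul_le g).preimage (f := fun β ω => β - f ω) (by fun_prop)

variable [Nonempty Ω]

theorem bddBelow_sellingPrices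
    (hasl : ∀ lam : Fin n → ℝ, (∀ i, 0 ≤ lam i) →
      0 ≤ univ.sup' univ_nonempty (fun ω => ∑ i, lam i * g i ω)) :
    BddBelow (sellingPrices g f) := by
  refine ⟨univ.inf' univ_nonempty f, ?_⟩
  rintro β ⟨lam, hlam, hβ⟩
  obtain ⟨ω, -, hω⟩ := (le_sup'_iff _).mp (hasl lam hlam)
  exact (inf'_le f (mem_univ ω)).trans (by linarith [hβ ω])

theorem sup'_add_sum_mul_mem_sellingPrices {lam : Fin n → ℝ} (hlam : ∀ i, 0 ≤ lam i) :
    univ.sup' univ_nonempty (fun ω => f ω + ∑ i, lam i * g i ω) ∈ sellingPrices g f :=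
  ⟨lam, hlam, fun ω => by linarith [le_sup' (fun ω => f ω + ∑ i, lam i * g i ω) (mem_univ ω)]⟩

end Gambles

/-- Minimax identity (Appendix B, eq. (B.1)): the infimum defining `Ē_D(f)` is
attained as a minimum of `max_ω (f(ω) + ∑ λᵢ gᵢ(ω))` over nonnegative `λ`. -/
theorem upperExtD_eq_min_max
    {Ω : Type*} [Fintype Ω] [Nonempty Ω] (n : ℕ) (g : Fin n → Ω → ℝ)
    (hasl : ∀ lam : Fin n → ℝ, (∀ i, 0 ≤ lam i) →
      0 ≤ Finset.univ.sup' Finset.univ_nonempty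
        (fun ω => ∑ i : Fin n, lam i * g i ω))
    (f : Ω → ℝ) :
    (∃ lam : Fin n → ℝ, (∀ i, 0 ≤ lam i) ∧
      Finset.univ.sup' Finset.univ_nonempty
        (fun ω => f ω + ∑ i : Fin n, lam i * g i ω) = upperExtD g f) ∧
    (∀ lam : Fin n → ℝ, (∀ i, 0 ≤ lam i) →
      upperExtD g f ≤ Finset.univ.sup' Finset.univ_nonempty
        (fun ω => f ω + ∑ i : Fin n, lam i * g i ω)) := by
  have hbdd := bddBelow_sellingPrices g f hasl
  have hle (lam : Fin n → ℝ) (hlam : ∀ i, 0 ≤ lam i) :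
      upperExtD g f ≤ univ.sup' univ_nonempty (fun ω => f ω + ∑ i, lam i * g i ω) :=
    csInf_le hbdd (sup'_add_sum_mul_mem_sellingPrices g f hlam)
  obtain ⟨lam, hlam, hmin⟩ : upperExtD g f ∈ sellingPrices g f :=
    (isClosed_sellingPrices g f).csInf_mem
      ⟨_, sup'_add_sum_mul_mem_sellingPrices g f (lam := 0) fun _ => le_rfl⟩ hbdd
  exact ⟨⟨lam, hlam, le_antisymm (sup'_le _ _ fun ω _ => by linarith [hmin ω]) (hle lam hlam)⟩,
    hle⟩
end
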